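/- Let (Ω, ℬ, ℙ) be a probability space, and let g₁, g₂ : Ω → M be defined, for a measurable set A with ℙ(A) = 1/2 and distinct elements b₁ ≠ b₂ of M, by g₁ = b₁ on A, g₁ = b₂ on Aᶜ, and g₂ = b₂ on A, g₂ = b₁ on Aᶜ. Then ℙ({t : g₁(t) = g₂(t)}) = 0, while the product measure ((g₁)_*ℙ) ⊗ ((g₂)_*ℙ) assigns probability 1/2 to the diagonal {(x,y) ∈ M × M : x = y}. -/

import Mathlib

open MeasureTheory in
private lemma smul_prod_aux {α β : Type*} [MeasurableSpace α] [MeasurableSpace β]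
    (c : ENNReal) (μ : Measure α) [SFinite μ] (ν : Measure β) [SFinite ν] :
    (c • μ).prod ν = c • μ.prod ν := by
  ext s hs
  rw [Measure.prod_apply hs, Measure.smul_apply, Measure.prod_apply hs, smul_eq_mul,
    lintegral_smul_measure, smul_eq_mul]

open MeasureTheory in
private lemma prod_smul_aux {α β : Type*} [MeasurableSpace α] [MeasurableSpace β]
    (c : ENNReal) (hc : c ≠ ⊤) (μ : Measure α) [SFinite μ] (ν : Measure β) [SFinite ν] :
    μ.prod (c • ν) = c • μ.prod ν := by
  ext s hs
  rw [Measure.prod_apply hs, Measure.smul_apply, Measure.prod_apply hs, smul_eq_mul,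
    ← lintegral_const_mul' _ _ hc]
  simp [Measure.smul_apply]

open MeasureTheory Classical in

theorem stmt7 {Ω M : Type*} [MeasurableSpace Ω] [MeasurableSpace M]
    [MeasurableSingletonClass M]
    (ℙ : Measure Ω) [IsProbabilityMeasure ℙ]
    (A : Set Ω) (hA : MeasurableSet A) (hA2 : ℙ A = 1 / 2)
    (b₁ b₂ : M) (hb : b₁ ≠ b₂)
    (g₁ g₂ : Ω → M)
    (hg₁ : g₁ = fun t => if t ∈ A then b₁ else b₂)
    (hg₂ : g₂ = fun t => if t ∈ A then b₂ else b₁)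
    (hm₁ : Measurable g₁) (hm₂ : Measurable g₂) :
    ℙ {t | g₁ t = g₂ t} = 0 ∧
      ((ℙ.map g₁).prod (ℙ.map g₂)) {p : M × M | p.1 = p.2} = 1 / 2 := by
  have hc : ℙ Aᶜ = 1 / 2 := by
    rw [measure_compl hA (measure_ne_top ℙ A), measure_univ, hA2, one_div,
      ENNReal.one_sub_inv_two]
  constructor
  · have : {t | g₁ t = g₂ t} = ∅ := by
      ext t
      simp only [Set.mem_setOf_eq, Set.mem_empty_iff_false, iff_false, hg₁, hg₂]
      by_cases h : t ∈ A <;> simp [h, hb, hb.symm]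
    rw [this, measure_empty]
  · have hμ : ℙ.map g₁ =
        (1/2 : ENNReal) • Measure.dirac b₁ + (1/2 : ENNReal) • Measure.dirac b₂ := by
      ext s hs
      rw [Measure.map_apply hm₁ hs, hg₁]
      by_cases h1 : b₁ ∈ s <;> by_cases h2 : b₂ ∈ s
      · have hp : (fun t => if t ∈ A then b₁ else b₂) ⁻¹' s = Set.univ := by
          ext t; by_cases h : t ∈ A <;> simp [h, h1, h2]
        simp [hp, Measure.dirac_apply, Set.indicator, h1, h2, ENNReal.inv_two_add_inv_two]
      · have hp : (fun t => if t ∈ A then b₁ else b₂) ⁻¹' s = A := by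
          ext t; by_cases h : t ∈ A <;> simp [h, h1, h2]
        simp [hp, hA2, Measure.dirac_apply, Set.indicator, h1, h2]
      · have hp : (fun t => if t ∈ A then b₁ else b₂) ⁻¹' s = Aᶜ := by
          ext t; by_cases h : t ∈ A <;> simp [h, h1, h2]
        simp [hp, hc, Measure.dirac_apply, Set.indicator, h1, h2]
      · have hp : (fun t => if t ∈ A then b₁ else b₂) ⁻¹' s = ∅ := by
          ext t; by_cases h : t ∈ A <;> simp [h, h1, h2]
        simp [hp, Measure.dirac_apply, Set.indicator, h1, h2]
    have hν : ℙ.map g₂ =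
        (1/2 : ENNReal) • Measure.dirac b₂ + (1/2 : ENNReal) • Measure.dirac b₁ := by
      ext s hs
      rw [Measure.map_apply hm₂ hs, hg₂]
      by_cases h1 : b₁ ∈ s <;> by_cases h2 : b₂ ∈ s
      · have hp : (fun t => if t ∈ A then b₂ else b₁) ⁻¹' s = Set.univ := by
          ext t; by_cases h : t ∈ A <;> simp [h, h1, h2]
        simp [hp, Measure.dirac_apply, Set.indicator, h1, h2, ENNReal.inv_two_add_inv_two]
      · have hp : (fun t => if t ∈ A then b₂ else b₁) ⁻¹' s = Aᶜ := by
          ext t; by_cases h : t ∈ A <;> simp [h, h1, h2]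
        simp [hp, hc, Measure.dirac_apply, Set.indicator, h1, h2]
      · have hp : (fun t => if t ∈ A then b₂ else b₁) ⁻¹' s = A := by
          ext t; by_cases h : t ∈ A <;> simp [h, h1, h2]
        simp [hp, hA2, Measure.dirac_apply, Set.indicator, h1, h2]
      · have hp : (fun t => if t ∈ A then b₂ else b₁) ⁻¹' s = ∅ := by
          ext t; by_cases h : t ∈ A <;> simp [h, h1, h2]
        simp [hp, Measure.dirac_apply, Set.indicator, h1, h2]
    rw [hμ, hν]
    have h2 : (1/2 : ENNReal) ≠ ⊤ := by simp
    simp only [Measure.add_prod, Measure.prod_add, smul_prod_aux,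
      prod_smul_aux _ h2, Measure.dirac_prod_dirac]
    simp only [Measure.add_apply, Measure.smul_apply, smul_eq_mul,
      Measure.dirac_apply, Set.indicator, Set.mem_setOf_eq]
    simp only [hb, hb.symm, if_true, if_false]
    simp only [Pi.one_apply, mul_one, mul_zero, add_zero, zero_add]
    rw [← mul_add, ENNReal.add_halves, mul_one]
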